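/- arXiv:0901.3112 — 3 statements merged into one kernel-verified Lean document; each statement's English description precedes it below -/
import Mathlib

section
/- Let φ = (φ₁, φ₂) : ℝ²ⁿ → ℝⁿ × ℝⁿ be a smooth map and F : ℝ²ⁿ → ℝ a smooth function with φ*λ₀ − λ₀ = dF. Let S : ℝ²ⁿ × ℝᴺ → ℝ be smooth and let γ : [0,1] → ℝ²ⁿ × ℝᴺ be a smooth path with γ(t) ∈ Σ_S and i_S(γ(t)) ∈ Γ_φ(ℝ²ⁿ) for all t. Suppose i_S(γ(0)) = (p, 0) for a point p with φ(p) = p and F(p) = 0, and i_S(γ(1)) = (q, 0). Then q is a fixed point of φ and S(γ(1)) − S(γ(0)) = F(q). (Thus, for a generating function of Γ_φ normalized to vanish at a fiber-critical point over a point outside the support, the critical value corresponding to a fixed point q equals its symplectic action F(q).) -/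
noncomputable section

/-- ℝ²ⁿ = ℝⁿ × ℝⁿ -/
abbrev En (n : ℕ) := (Fin n → ℝ) × (Fin n → ℝ)

/-- Euclidean pairing ⟨x, y⟩ on ℝⁿ. -/
def dot {n : ℕ} (x y : Fin n → ℝ) : ℝ := ∑ i, x i * y i

/-- Γ_φ(x,y) = ((x, φ₂(x,y)), (φ₂(x,y) − y, x − φ₁(x,y))). -/
def Gamma (n : ℕ) (φ : En n → En n) (w : En n) : En n × En n :=
  ((w.1, (φ w).2), ((φ w).2 - w.2, w.1 - (φ w).1))

/-- The partial derivative ∂_qS(q,ξ) of S in the base variable, as a vector in ℝ²ⁿ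
(identified with the covector via the Euclidean pairing). -/
def gradq (n N : ℕ) (S : En n × (Fin N → ℝ) → ℝ) (e : En n × (Fin N → ℝ)) : En n :=
  (fun i => fderiv ℝ (fun q => S (q, e.2)) e.1 ((Pi.single i 1 : Fin n → ℝ), 0),
   fun i => fderiv ℝ (fun q => S (q, e.2)) e.1 (0, (Pi.single i 1 : Fin n → ℝ)))

/-- The fiber-critical set Σ_S = {(q,ξ) : ∂_ξS(q,ξ) = 0}. -/
def SigmaS (n N : ℕ) (S : En n × (Fin N → ℝ) → ℝ) : Set (En n × (Fin N → ℝ)) :=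
  {e | fderiv ℝ (fun ξ => S (e.1, ξ)) e.2 = 0}

/-- i_S(q,ξ) = (q, ∂_qS(q,ξ)). -/
def iS (n N : ℕ) (S : En n × (Fin N → ℝ) → ℝ) (e : En n × (Fin N → ℝ)) : En n × En n :=
  (e.1, gradq n N S e)

lemma dot_comm {n : ℕ} (u v : Fin n → ℝ) : dot u v = dot v u := by
  simp [dot, mul_comm]

lemma hasDerivAt_clm {E F : Type*} [NormedAddCommGroup E] [NormedSpace ℝ E]
    [NormedAddCommGroup F] [NormedSpace ℝ F] (L : E →L[ℝ] F) {f : ℝ → E} {f' : E} {t : ℝ}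
    (hf : HasDerivAt f f' t) : HasDerivAt (fun s => L (f s)) (L f') t := by
  exact (L.hasFDerivAt.comp_hasDerivAt t hf)

lemma hasDerivAt_dot {n : ℕ} {f g : ℝ → Fin n → ℝ} {f' g' : Fin n → ℝ} {t : ℝ}
    (hf : HasDerivAt f f' t) (hg : HasDerivAt g g' t) :
    HasDerivAt (fun s => dot (f s) (g s)) (dot f' (g t) + dot (f t) g') t := by
  have h : ∀ i : Fin n, HasDerivAt (fun s => f s i * g s i) (f' i * g t i + f t i * g' i) t :=
    fun i => (hasDerivAt_clm (ContinuousLinearMap.proj i) hf).mul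
      (hasDerivAt_clm (ContinuousLinearMap.proj i) hg)
  have hsum := HasDerivAt.fun_sum (fun i (_ : i ∈ Finset.univ) => h i)
  simpa [dot, Finset.sum_add_distrib] using hsum

lemma pi_clm_expand {n : ℕ} (L : (Fin n → ℝ) →L[ℝ] ℝ) (u : Fin n → ℝ) :
    L u = dot (fun i => L (Pi.single i 1)) u := by
  have h := LinearMap.pi_apply_eq_sum_univ (L : (Fin n → ℝ) →ₗ[ℝ] ℝ) u
  simp only [ContinuousLinearMap.coe_coe] at h
  rw [h]
  simp only [dot]
  refine Finset.sum_congr rfl fun i _ => ?_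
  rw [smul_eq_mul, mul_comm]
  congr 2
  funext j
  simp [Pi.single_apply, eq_comm]

lemma clm_pair_expand {n : ℕ} (L : En n →L[ℝ] ℝ) (u : En n) :
    L u = dot (fun i => L (Pi.single i 1, 0)) u.1 + dot (fun i => L (0, Pi.single i 1)) u.2 := by
  have h1 : u = ((u.1, 0) : En n) + ((0 : Fin n → ℝ), u.2) := by
    ext <;> simp
  calc L u = L ((u.1, 0) : En n) + L ((0 : Fin n → ℝ), u.2) := by
        conv_lhs => rw [h1]
        rw [map_add]
    _ = _ := by
        congr 1
        · have := pi_clm_expand (L.comp (ContinuousLinearMap.inl ℝ (Fin n → ℝ) (Fin n → ℝ))) u.1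
          simpa using this
        · have := pi_clm_expand (L.comp (ContinuousLinearMap.inr ℝ (Fin n → ℝ) (Fin n → ℝ))) u.2
          simpa using this

lemma fderiv_partial_q {n N : ℕ} {S : En n × (Fin N → ℝ) → ℝ} (hS : Differentiable ℝ S)
    (e : En n × (Fin N → ℝ)) (v : En n) :
    fderiv ℝ (fun q => S (q, e.2)) e.1 v = fderiv ℝ S e (v, 0) := by
  have h2 := (hS (e.1, e.2)).hasFDerivAt.comp e.1 (hasFDerivAt_prodMk_left (𝕜 := ℝ) e.1 e.2)
  have h3 : HasFDerivAt (fun q => S (q, e.2))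
      ((fderiv ℝ S e).comp (ContinuousLinearMap.inl ℝ (En n) (Fin N → ℝ))) e.1 := h2
  rw [h3.fderiv]
  simp

lemma fderiv_partial_xi {n N : ℕ} {S : En n × (Fin N → ℝ) → ℝ} (hS : Differentiable ℝ S)
    (e : En n × (Fin N → ℝ)) (u : Fin N → ℝ) :
    fderiv ℝ (fun ξ => S (e.1, ξ)) e.2 u = fderiv ℝ S e (0, u) := by
  have h2 := (hS (e.1, e.2)).hasFDerivAt.comp e.2 (hasFDerivAt_prodMk_right (𝕜 := ℝ) e.1 e.2)
  have h3 : HasFDerivAt (fun ξ => S (e.1, ξ))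
      ((fderiv ℝ S e).comp (ContinuousLinearMap.inr ℝ (En n) (Fin N → ℝ))) e.2 := h2
  rw [h3.fderiv]
  simp

def Gmap (n N : ℕ) (S : En n × (Fin N → ℝ) → ℝ) (e : En n × (Fin N → ℝ)) : En n :=
  (fun i => fderiv ℝ S e ((Pi.single i 1, 0), 0),
   fun i => fderiv ℝ S e ((0, Pi.single i 1), 0))

lemma Gmap_smooth {n N : ℕ} {S : En n × (Fin N → ℝ) → ℝ} (hS : ContDiff ℝ (⊤ : ℕ∞) S) :
    ContDiff ℝ (⊤ : ℕ∞) (Gmap n N S) := by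
  have hD : ContDiff ℝ (⊤ : ℕ∞) (fderiv ℝ S) := hS.fderiv_right (by simp)
  exact ContDiff.prodMk
    (contDiff_pi.mpr fun i => hD.clm_apply contDiff_const)
    (contDiff_pi.mpr fun i => hD.clm_apply contDiff_const)

lemma gradq_eq_Gmap {n N : ℕ} {S : En n × (Fin N → ℝ) → ℝ} (hS : Differentiable ℝ S)
    (e : En n × (Fin N → ℝ)) : gradq n N S e = Gmap n N S e := by
  unfold gradq Gmap
  refine Prod.ext ?_ ?_
  · funext i; exact fderiv_partial_q hS e _
  · funext i; exact fderiv_partial_q hS e _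


/-- If S generates points of Γ_φ along a path γ in Σ_S starting over a fixed point p with
φ(p) = p, F(p) = 0 and ending over (q,0), then q is a fixed point of φ and the difference of
critical values S(γ(1)) − S(γ(0)) equals the symplectic action F(q). -/
theorem stmt_1 (n N : ℕ) (φ : En n → En n) (F : En n → ℝ)
    (hφ : ContDiff ℝ (⊤ : ℕ∞) φ) (hF : ContDiff ℝ (⊤ : ℕ∞) F)
    (hdF : ∀ (w v : En n),
      dot ((φ w).2) (fderiv ℝ (fun u => (φ u).1) w v) - dot w.2 v.1 = fderiv ℝ F w v)
    (S : En n × (Fin N → ℝ) → ℝ) (hS : ContDiff ℝ (⊤ : ℕ∞) S)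
    (γ : ℝ → En n × (Fin N → ℝ)) (hγ : ContDiff ℝ (⊤ : ℕ∞) γ)
    (hgSigma : ∀ t ∈ Set.Icc (0:ℝ) 1, γ t ∈ SigmaS n N S)
    (hgGamma : ∀ t ∈ Set.Icc (0:ℝ) 1, iS n N S (γ t) ∈ Set.range (Gamma n φ))
    (p q : En n)
    (h0 : iS n N S (γ 0) = (p, 0)) (hp : φ p = p) (hFp : F p = 0)
    (h1 : iS n N S (γ 1) = (q, 0)) :
    φ q = q ∧ S (γ 1) - S (γ 0) = F q := by
  have hSd : Differentiable ℝ S := hS.differentiable (by simp)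
  have hgr : ∀ t : ℝ, gradq n N S (γ t) = Gmap n N S (γ t) := fun t => gradq_eq_Gmap hSd (γ t)
  -- notation: A t := Gmap n N S (γ t), w t := ((γ t).1.1, (γ t).1.2 - (A t).1)
  -- endpoint facts
  have h0b : (γ 0).1 = p := congrArg Prod.fst h0
  have h0g : Gmap n N S (γ 0) = 0 := by rw [← hgr]; exact congrArg Prod.snd h0
  have h1b : (γ 1).1 = q := congrArg Prod.fst h1
  have h1g : Gmap n N S (γ 1) = 0 := by rw [← hgr]; exact congrArg Prod.snd h1
  have hw0 : ((γ 0).1.1, (γ 0).1.2 - (Gmap n N S (γ 0)).1) = p := by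
    rw [h0b, h0g]; simp
  have hw1 : ((γ 1).1.1, (γ 1).1.2 - (Gmap n N S (γ 1)).1) = q := by
    rw [h1b, h1g]; simp
  -- key pointwise identities from membership in the image of Gamma
  have hK : ∀ t ∈ Set.Icc (0:ℝ) 1,
      (φ ((γ t).1.1, (γ t).1.2 - (Gmap n N S (γ t)).1)).2 = (γ t).1.2 ∧
      (φ ((γ t).1.1, (γ t).1.2 - (Gmap n N S (γ t)).1)).1 = (γ t).1.1 - (Gmap n N S (γ t)).2 := by
    intro t ht
    obtain ⟨u, hu⟩ := hgGamma t ht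
    have hu' : ((u.1, (φ u).2), ((φ u).2 - u.2, u.1 - (φ u).1)) = ((γ t).1, Gmap n N S (γ t)) := by
      rw [← hgr t]; exact hu
    have e1 : u.1 = (γ t).1.1 := congrArg (fun z => z.1.1) hu'
    have e2 : (φ u).2 = (γ t).1.2 := congrArg (fun z => z.1.2) hu'
    have e3 : (φ u).2 - u.2 = (Gmap n N S (γ t)).1 := congrArg (fun z => z.2.1) hu'
    have e4 : u.1 - (φ u).1 = (Gmap n N S (γ t)).2 := congrArg (fun z => z.2.2) hu'
    have hu2 : u.2 = (γ t).1.2 - (Gmap n N S (γ t)).1 := by rw [← e3, ← e2]; abel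
    have huw : u = ((γ t).1.1, (γ t).1.2 - (Gmap n N S (γ t)).1) := Prod.ext e1 hu2
    constructor
    · rw [← huw]; exact e2
    · rw [← huw, ← e1, ← e4]; abel
  -- the fixed point
  have hfix : φ q = q := by
    have h := hK 1 (by norm_num)
    rw [hw1] at h
    rw [h1g] at h
    refine Prod.ext ?_ ?_
    · rw [h.2, h1b]; simp
    · rw [h.1, h1b]
  -- the function whose derivative vanishes on [0,1]
  have key : ∀ t ∈ Set.Icc (0:ℝ) 1,
      HasDerivAt (fun s => S (γ s) - F ((γ s).1.1, (γ s).1.2 - (Gmap n N S (γ s)).1)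
        - dot ((Gmap n N S (γ s)).2) ((γ s).1.2)) 0 t := by
    intro t ht
    have hγt : HasDerivAt γ (deriv γ t) t := (hγ.differentiable (by simp) t).hasDerivAt
    have hAdiff : Differentiable ℝ (fun s => Gmap n N S (γ s)) :=
      ((Gmap_smooth hS).comp hγ).differentiable (by simp)
    have hAt : HasDerivAt (fun s => Gmap n N S (γ s)) (deriv (fun s => Gmap n N S (γ s)) t) t :=
      (hAdiff t).hasDerivAt
    set v := deriv γ t with hv_def
    set va := deriv (fun s => Gmap n N S (γ s)) t with hva_def
    have hx : HasDerivAt (fun s => (γ s).1.1) v.1.1 t := by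
      simpa using hasDerivAt_clm ((ContinuousLinearMap.fst ℝ (Fin n → ℝ) (Fin n → ℝ)).comp
        (ContinuousLinearMap.fst ℝ (En n) (Fin N → ℝ))) hγt
    have hy : HasDerivAt (fun s => (γ s).1.2) v.1.2 t := by
      simpa using hasDerivAt_clm ((ContinuousLinearMap.snd ℝ (Fin n → ℝ) (Fin n → ℝ)).comp
        (ContinuousLinearMap.fst ℝ (En n) (Fin N → ℝ))) hγt
    have ha1 : HasDerivAt (fun s => (Gmap n N S (γ s)).1) va.1 t := by
      simpa using hasDerivAt_clm (ContinuousLinearMap.fst ℝ (Fin n → ℝ) (Fin n → ℝ)) hAt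
    have hb : HasDerivAt (fun s => (Gmap n N S (γ s)).2) va.2 t := by
      simpa using hasDerivAt_clm (ContinuousLinearMap.snd ℝ (Fin n → ℝ) (Fin n → ℝ)) hAt
    have hwd : HasDerivAt (fun s => (((γ s).1.1, (γ s).1.2 - (Gmap n N S (γ s)).1) : En n))
        (v.1.1, v.1.2 - va.1) t := hx.prodMk (hy.sub ha1)
    -- derivative of S ∘ γ
    have hS1 : HasDerivAt (fun s => S (γ s))
        (dot ((Gmap n N S (γ t)).1) v.1.1 + dot ((Gmap n N S (γ t)).2) v.1.2) t := by
      have h1 := (hSd (γ t)).hasFDerivAt.comp_hasDerivAt t hγt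
      have h1' : HasDerivAt (fun s => S (γ s)) (fderiv ℝ S (γ t) v) t := by exact h1
      have e0 : fderiv ℝ S (γ t) v
          = fderiv ℝ S (γ t) (v.1, 0) + fderiv ℝ S (γ t) ((0 : En n), v.2) := by
        rw [← map_add]; congr 1; ext <;> simp
      have e1 : fderiv ℝ S (γ t) ((0 : En n), v.2) = 0 := by
        rw [← fderiv_partial_xi hSd (γ t) v.2]
        have hσ : fderiv ℝ (fun ξ => S ((γ t).1, ξ)) (γ t).2 = 0 := hgSigma t ht
        rw [hσ]; simp
      have e2 : fderiv ℝ S (γ t) (v.1, 0)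
          = dot ((Gmap n N S (γ t)).1) v.1.1 + dot ((Gmap n N S (γ t)).2) v.1.2 := by
        have := clm_pair_expand
          ((fderiv ℝ S (γ t)).comp (ContinuousLinearMap.inl ℝ (En n) (Fin N → ℝ))) v.1
        simpa [Gmap] using this
      have e3 : fderiv ℝ S (γ t) v
          = dot ((Gmap n N S (γ t)).1) v.1.1 + dot ((Gmap n N S (γ t)).2) v.1.2 := by
        rw [e0, e1, add_zero, e2]
      rw [← e3]; exact h1'
    -- derivative of F ∘ w
    have hφ1 : ContDiff ℝ (⊤ : ℕ∞) (fun u : En n => (φ u).1) := contDiff_fst.comp hφ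
    have hF1 : HasDerivAt (fun s => F ((γ s).1.1, (γ s).1.2 - (Gmap n N S (γ s)).1))
        (dot ((Gmap n N S (γ t)).1) v.1.1 - dot ((γ t).1.2) va.2) t := by
      have h2 := (hF.differentiable (by simp) _).hasFDerivAt.comp_hasDerivAt t hwd
      have h2' : HasDerivAt (fun s => F ((γ s).1.1, (γ s).1.2 - (Gmap n N S (γ s)).1))
          (fderiv ℝ F ((γ t).1.1, (γ t).1.2 - (Gmap n N S (γ t)).1) (v.1.1, v.1.2 - va.1)) t := by
        exact h2
      have hP : fderiv ℝ (fun u : En n => (φ u).1)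
          ((γ t).1.1, (γ t).1.2 - (Gmap n N S (γ t)).1) (v.1.1, v.1.2 - va.1)
          = v.1.1 - va.2 := by
        have hc := (hφ1.differentiable (by simp) _).hasFDerivAt.comp_hasDerivAt t hwd
        have hc' : HasDerivAt (fun s => (φ ((γ s).1.1, (γ s).1.2 - (Gmap n N S (γ s)).1)).1)
            (fderiv ℝ (fun u : En n => (φ u).1)
              ((γ t).1.1, (γ t).1.2 - (Gmap n N S (γ t)).1) (v.1.1, v.1.2 - va.1)) t := by
          exact hc
        have hd2 : HasDerivAt (fun s => (γ s).1.1 - (Gmap n N S (γ s)).2) (v.1.1 - va.2) t :=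
          hx.sub hb
        have hU : UniqueDiffWithinAt ℝ (Set.Icc (0:ℝ) 1) t := (uniqueDiffOn_Icc one_pos) t ht
        have hW1 := (hc'.hasDerivWithinAt (s := Set.Icc (0:ℝ) 1)).derivWithin hU
        have hW2 : HasDerivWithinAt (fun s => (φ ((γ s).1.1, (γ s).1.2 - (Gmap n N S (γ s)).1)).1)
            (v.1.1 - va.2) (Set.Icc (0:ℝ) 1) t := by
          refine (hd2.hasDerivWithinAt).congr ?_ ?_
          · intro s hs; exact (hK s hs).2
          · exact (hK t ht).2
        rw [← hW1, hW2.derivWithin hU]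
      have hval : fderiv ℝ F ((γ t).1.1, (γ t).1.2 - (Gmap n N S (γ t)).1) (v.1.1, v.1.2 - va.1)
          = dot ((Gmap n N S (γ t)).1) v.1.1 - dot ((γ t).1.2) va.2 := by
        rw [← hdF ((γ t).1.1, (γ t).1.2 - (Gmap n N S (γ t)).1) (v.1.1, v.1.2 - va.1)]
        rw [hP, (hK t ht).1]
        simp only [dot, Pi.sub_apply, mul_sub, sub_mul, Finset.sum_sub_distrib]
        ring
      rw [← hval]; exact h2'
    -- derivative of the pairing term
    have hpair : HasDerivAt (fun s => dot ((Gmap n N S (γ s)).2) ((γ s).1.2))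
        (dot va.2 ((γ t).1.2) + dot ((Gmap n N S (γ t)).2) v.1.2) t := hasDerivAt_dot hb hy
    have hfin := (hS1.sub hF1).sub hpair
    refine hfin.congr_deriv ?_
    rw [dot_comm va.2 ((γ t).1.2)]
    ring
  -- the function is continuous on [0,1]
  have hcont : Continuous (fun s => S (γ s) - F ((γ s).1.1, (γ s).1.2 - (Gmap n N S (γ s)).1)
      - dot ((Gmap n N S (γ s)).2) ((γ s).1.2)) := by
    have hγc : Continuous γ := hγ.continuous
    have hAc : Continuous (fun s => Gmap n N S (γ s)) := ((Gmap_smooth hS).comp hγ).continuous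
    have hx : Continuous (fun s => (γ s).1.1) := (continuous_fst.comp (continuous_fst.comp hγc))
    have hy : Continuous (fun s => (γ s).1.2) := (continuous_snd.comp (continuous_fst.comp hγc))
    have ha1 : Continuous (fun s => (Gmap n N S (γ s)).1) := continuous_fst.comp hAc
    have hb : Continuous (fun s => (Gmap n N S (γ s)).2) := continuous_snd.comp hAc
    have hwc : Continuous (fun s => (((γ s).1.1, (γ s).1.2 - (Gmap n N S (γ s)).1) : En n)) :=
      hx.prodMk (hy.sub ha1)
    have hdotc : Continuous (fun s => dot ((Gmap n N S (γ s)).2) ((γ s).1.2)) := by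
      simp only [dot]
      exact continuous_finset_sum _ fun i _ =>
        ((continuous_apply i).comp hb).mul ((continuous_apply i).comp hy)
    exact ((hS.continuous.comp hγc).sub (hF.continuous.comp hwc)).sub hdotc
  have hconst := constant_of_has_deriv_right_zero (hcont.continuousOn)
    (fun s hs => (key s (Set.mem_Icc_of_Ico hs)).hasDerivWithinAt) 1 (by norm_num)
  rw [hw0, hw1, hFp] at hconst
  have hz0 : dot ((Gmap n N S (γ 0)).2) ((γ 0).1.2) = 0 := by rw [h0g]; simp [dot]
  have hz1 : dot ((Gmap n N S (γ 1)).2) ((γ 1).1.2) = 0 := by rw [h1g]; simp [dot]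
  rw [hz0, hz1] at hconst
  exact ⟨hfix, by linarith⟩
end
end

section
/- Let φ be a contactomorphism of ℝ^{2n+1} with conformal factor e^g and let q = (x,y,z) be a translated point of φ. Then for a tangent vector X = (X_x, X_y, X_z) ∈ ℝ^{2n+1}, the fiber component of DΓ_φ(q)X vanishes (i.e. D(φ₂ − e^g y)(q)X = 0, D(x − φ₁)(q)X = 0 and D(e^g)(q)X = 0) if and only if Dφ(q)X = X and Dg(q)X = 0. Consequently, DΓ_φ(q)X is tangent to the 0-wall of J¹ℝ^{2n+1} if and only if Dφ(q)X = X and Dg(q)X = 0; so the intersection of Γ_φ with the 0-wall at Γ_φ(q) fails to be transverse exactly when there is a nonzero X with Dφ(q)X = X and Dg(q)X = 0. -/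
noncomputable section

/-- ℝ^{2n+1} = ℝⁿ × ℝⁿ × ℝ with coordinates (x, y, z). -/
abbrev Cn (n : ℕ) := (Fin n → ℝ) × (Fin n → ℝ) × ℝ

/-- The condition φ*(dz − y·dx) = e^g (dz − y·dx): for all q and tangent vectors v,
D(φ₃)(q)v − ⟨φ₂(q), D(φ₁)(q)v⟩ = e^{g(q)} (v₃ − ⟨y, v₁⟩). -/
def ContactCond (n : ℕ) (φ : Cn n → Cn n) (g : Cn n → ℝ) : Prop :=
  ∀ (q v : Cn n),
    fderiv ℝ (fun w => (φ w).2.2) q v - dot ((φ q).2.1) (fderiv ℝ (fun w => (φ w).1) q v) =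
      Real.exp (g q) * (v.2.2 - dot q.2.1 v.1)

/-- φ is a contactomorphism of ℝ^{2n+1} with conformal factor e^g: a smooth diffeomorphism
satisfying φ*(dz − y·dx) = e^g (dz − y·dx). -/
def IsContacto (n : ℕ) (φ : Cn n → Cn n) (g : Cn n → ℝ) : Prop :=
  ContDiff ℝ (⊤ : ℕ∞) φ ∧ Function.Bijective φ ∧ ContDiff ℝ (⊤ : ℕ∞) (Function.invFun φ) ∧
  ContDiff ℝ (⊤ : ℕ∞) g ∧ ContactCond n φ g

/-- Γ_φ : ℝ^{2n+1} → J¹ℝ^{2n+1},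
Γ_φ(x,y,z) = ((x, φ₂, z), (φ₂ − e^g y, x − φ₁, e^g − 1), ⟨x,φ₂⟩ − ⟨φ₁,φ₂⟩ + φ₃ − z). -/
def GammaC (n : ℕ) (φ : Cn n → Cn n) (g : Cn n → ℝ) (q : Cn n) : Cn n × Cn n × ℝ :=
  ((q.1, (φ q).2.1, q.2.2),
   ((φ q).2.1 - Real.exp (g q) • q.2.1, q.1 - (φ q).1, Real.exp (g q) - 1),
   dot q.1 ((φ q).2.1) - dot ((φ q).1) ((φ q).2.1) + (φ q).2.2 - q.2.2)

/-- At a translated point q of a contactomorphism φ, the fiber component of DΓ_φ(q)X vanishes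
iff Dφ(q)X = X and Dg(q)X = 0; hence transversality of Γ_φ to the 0-wall at Γ_φ(q) fails
exactly when there is a nonzero such X. -/
theorem stmt_9 (n : ℕ) (φ : Cn n → Cn n) (g : Cn n → ℝ) (h : IsContacto n φ g)
    (q : Cn n) (hq : (φ q).1 = q.1 ∧ (φ q).2.1 = q.2.1 ∧ g q = 0) :
    (∀ X : Cn n,
      (fderiv ℝ (fun w => (φ w).2.1 - Real.exp (g w) • w.2.1) q X = 0 ∧
       fderiv ℝ (fun w => w.1 - (φ w).1) q X = 0 ∧
       fderiv ℝ (fun w => Real.exp (g w)) q X = 0) ↔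
      (fderiv ℝ φ q X = X ∧ fderiv ℝ g q X = 0)) ∧
    (∀ X : Cn n,
      (fderiv ℝ (GammaC n φ g) q X).2.1 = 0 ↔
      (fderiv ℝ φ q X = X ∧ fderiv ℝ g q X = 0)) ∧
    ((∃ X : Cn n, X ≠ 0 ∧ (fderiv ℝ (GammaC n φ g) q X).2.1 = 0) ↔
      (∃ X : Cn n, X ≠ 0 ∧ fderiv ℝ φ q X = X ∧ fderiv ℝ g q X = 0)) := by
  obtain ⟨hφs, hbij, hinv, hgs, hcc⟩ := h
  obtain ⟨hq1, hq2, hq3⟩ := hq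
  have hφd : DifferentiableAt ℝ φ q := (hφs.differentiable (by simp)).differentiableAt
  have hgd : DifferentiableAt ℝ g q := (hgs.differentiable (by simp)).differentiableAt
  have hφ : HasFDerivAt φ (fderiv ℝ φ q) q := hφd.hasFDerivAt
  have hg : HasFDerivAt g (fderiv ℝ g q) q := hgd.hasFDerivAt
  set Dφ := fderiv ℝ φ q with hDφ
  set Dg := fderiv ℝ g q with hDg
  have he0 : Real.exp (g q) = 1 := by rw [hq3, Real.exp_zero]
  -- derivatives of the three fiber components
  have h1 : HasFDerivAt (fun w : Cn n => (φ w).2.1 - Real.exp (g w) • w.2.1)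
      ((ContinuousLinearMap.fst ℝ (Fin n → ℝ) ℝ).comp
        ((ContinuousLinearMap.snd ℝ (Fin n → ℝ) ((Fin n → ℝ) × ℝ)).comp Dφ) -
       (Real.exp (g q) • ((ContinuousLinearMap.fst ℝ (Fin n → ℝ) ℝ).comp
          (ContinuousLinearMap.snd ℝ (Fin n → ℝ) ((Fin n → ℝ) × ℝ))) +
        (Real.exp (g q) • Dg).smulRight q.2.1)) q :=
    (hφ.snd.fst).sub (hg.exp.smul (hasFDerivAt_snd.fst))
  have h2 : HasFDerivAt (fun w : Cn n => w.1 - (φ w).1)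
      (ContinuousLinearMap.fst ℝ (Fin n → ℝ) ((Fin n → ℝ) × ℝ) -
       (ContinuousLinearMap.fst ℝ (Fin n → ℝ) ((Fin n → ℝ) × ℝ)).comp Dφ) q :=
    hasFDerivAt_fst.sub hφ.fst
  have h3 : HasFDerivAt (fun w : Cn n => Real.exp (g w)) (Real.exp (g q) • Dg) q := hg.exp
  -- evaluated forms
  have e1 : ∀ X : Cn n, fderiv ℝ (fun w : Cn n => (φ w).2.1 - Real.exp (g w) • w.2.1) q X =
      (Dφ X).2.1 - (X.2.1 + Dg X • q.2.1) := by
    intro X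
    rw [h1.fderiv]
    simp [he0]
  have e2 : ∀ X : Cn n, fderiv ℝ (fun w : Cn n => w.1 - (φ w).1) q X = X.1 - (Dφ X).1 := by
    intro X
    rw [h2.fderiv]
    simp
  have e3 : ∀ X : Cn n, fderiv ℝ (fun w : Cn n => Real.exp (g w)) q X = Dg X := by
    intro X
    rw [h3.fderiv]
    simp [he0]
  -- contact condition at q
  have hcq : ∀ X : Cn n, (Dφ X).2.2 - dot q.2.1 (Dφ X).1 = X.2.2 - dot q.2.1 X.1 := by
    intro X
    have := hcc q X
    rw [(hφ.snd.snd).fderiv, (hφ.fst).fderiv, hq2, he0, one_mul] at this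
    simpa using this
  have part1 : ∀ X : Cn n,
      (fderiv ℝ (fun w => (φ w).2.1 - Real.exp (g w) • w.2.1) q X = 0 ∧
       fderiv ℝ (fun w => w.1 - (φ w).1) q X = 0 ∧
       fderiv ℝ (fun w => Real.exp (g w)) q X = 0) ↔
      (fderiv ℝ φ q X = X ∧ fderiv ℝ g q X = 0) := by
    intro X
    rw [e1, e2, e3]
    constructor
    · rintro ⟨a1, a2, a3⟩
      rw [a3, zero_smul, add_zero] at a1
      have hx1 : (Dφ X).1 = X.1 := by
        have := sub_eq_zero.mp a2
        exact this.symm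
      have hx2 : (Dφ X).2.1 = X.2.1 := sub_eq_zero.mp a1
      have hx3 : (Dφ X).2.2 = X.2.2 := by
        have := hcq X
        rw [hx1] at this
        linarith
      refine ⟨?_, a3⟩
      exact Prod.ext hx1 (Prod.ext hx2 hx3)
    · rintro ⟨a, b⟩
      rw [a, b]
      simp
  -- differentiability of auxiliary pieces for GammaC
  have hdot : ∀ (u v : Cn n → Fin n → ℝ), DifferentiableAt ℝ u q → DifferentiableAt ℝ v q →
      DifferentiableAt ℝ (fun w => dot (u w) (v w)) q := by
    intro u v hu hv
    unfold dot
    apply DifferentiableAt.fun_sum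
    intro i _
    exact ((ContinuousLinearMap.proj (R := ℝ) (φ := fun _ : Fin n => ℝ) i).differentiableAt.comp q hu).mul
      ((ContinuousLinearMap.proj (R := ℝ) (φ := fun _ : Fin n => ℝ) i).differentiableAt.comp q hv)
  have hC : DifferentiableAt ℝ (fun w : Cn n =>
      dot w.1 ((φ w).2.1) - dot ((φ w).1) ((φ w).2.1) + (φ w).2.2 - w.2.2) q := by
    refine DifferentiableAt.sub (DifferentiableAt.add (DifferentiableAt.sub ?_ ?_) ?_) ?_
    · exact hdot _ _ differentiableAt_fst (hφd.snd.fst)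
    · exact hdot _ _ (hφd.fst) (hφd.snd.fst)
    · exact hφd.snd.snd
    · exact differentiableAt_snd.snd
  have hA : HasFDerivAt (fun w : Cn n => (w.1, (φ w).2.1, w.2.2))
      ((ContinuousLinearMap.fst ℝ (Fin n → ℝ) ((Fin n → ℝ) × ℝ)).prod
        (((ContinuousLinearMap.fst ℝ (Fin n → ℝ) ℝ).comp
            ((ContinuousLinearMap.snd ℝ (Fin n → ℝ) ((Fin n → ℝ) × ℝ)).comp Dφ)).prod
          ((ContinuousLinearMap.snd ℝ (Fin n → ℝ) ℝ).comp
            (ContinuousLinearMap.snd ℝ (Fin n → ℝ) ((Fin n → ℝ) × ℝ))))) q :=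
    hasFDerivAt_fst.prodMk ((hφ.snd.fst).prodMk (hasFDerivAt_snd.snd))
  have hGam := hA.prodMk ((h1.prodMk (h2.prodMk (h3.sub_const 1))).prodMk hC.hasFDerivAt)
  have hfg : fderiv ℝ (GammaC n φ g) q = fderiv ℝ (fun w : Cn n =>
      ((w.1, (φ w).2.1, w.2.2),
       ((φ w).2.1 - Real.exp (g w) • w.2.1, w.1 - (φ w).1, Real.exp (g w) - 1),
       dot w.1 ((φ w).2.1) - dot ((φ w).1) ((φ w).2.1) + (φ w).2.2 - w.2.2)) q := rfl
  have key : ∀ X : Cn n, (fderiv ℝ (GammaC n φ g) q X).2.1 =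
      (fderiv ℝ (fun w => (φ w).2.1 - Real.exp (g w) • w.2.1) q X,
       fderiv ℝ (fun w => w.1 - (φ w).1) q X,
       fderiv ℝ (fun w => Real.exp (g w)) q X) := by
    intro X
    rw [hfg, hGam.fderiv, h1.fderiv, h2.fderiv, h3.fderiv]
    simp [ContinuousLinearMap.prod_apply]
  have part2 : ∀ X : Cn n,
      (fderiv ℝ (GammaC n φ g) q X).2.1 = 0 ↔
      (fderiv ℝ φ q X = X ∧ fderiv ℝ g q X = 0) := by
    intro X
    rw [key X, ← part1 X]
    constructor
    · intro hz
      refine ⟨congrArg Prod.fst hz, congrArg (fun p => p.2.1) hz, congrArg (fun p => p.2.2) hz⟩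
    · rintro ⟨a, b, c⟩
      rw [a, b, c]
      rfl
  exact ⟨part1, part2, exists_congr fun X => and_congr_right fun _ => part2 X⟩
end
end

section
/- Let φ = (φ₁, φ₂) : ℝ²ⁿ → ℝⁿ × ℝⁿ be a smooth map and F : ℝ²ⁿ → ℝ smooth with φ*λ₀ − λ₀ = dF. Define the exact Legendrian lift Γ̃_φ : ℝ²ⁿ → J¹ℝ²ⁿ by Γ̃_φ(x,y) = ((x, φ₂), (φ₂ − y, x − φ₁), ⟨x, φ₂⟩ − ⟨φ₁, φ₂⟩ + F) (all evaluated at (x,y)), and the lift φ̃(x,y,z) = (φ₁(x,y), φ₂(x,y), z + F(x,y)) with its Legendrian graph Γ_{φ̃} : ℝ^{2n+1} → J¹ℝ^{2n+1}, Γ_{φ̃}(x,y,z) = ((x, φ₂, z), (φ₂ − y, x − φ₁, 0), ⟨x, φ₂⟩ − ⟨φ₁, φ₂⟩ + F). Suppose S : ℝ²ⁿ × ℝᴺ → ℝ is a smooth generating function for Γ̃_φ, i.e. j_S(Σ_S) = Γ̃_φ(ℝ²ⁿ). Then the function S̃ : ℝ^{2n+1} × ℝᴺ → ℝ defined by S̃(x,y,z;ξ)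 = S(x,y;ξ) is a generating function for Γ_{φ̃}, i.e. j_{S̃}(Σ_{S̃}) = Γ_{φ̃}(ℝ^{2n+1}). -/
noncomputable section

/-- ∂_qS(q,ξ) for a function with base ℝ²ⁿ. -/
def gradqE (n N : ℕ) (S : En n × (Fin N → ℝ) → ℝ) (e : En n × (Fin N → ℝ)) : En n :=
  (fun i => fderiv ℝ (fun q => S (q, e.2)) e.1 ((Pi.single i 1 : Fin n → ℝ), 0),
   fun i => fderiv ℝ (fun q => S (q, e.2)) e.1 (0, (Pi.single i 1 : Fin n → ℝ)))

/-- Fiber-critical set (base ℝ²ⁿ). -/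
def SigmaE (n N : ℕ) (S : En n × (Fin N → ℝ) → ℝ) : Set (En n × (Fin N → ℝ)) :=
  {e | fderiv ℝ (fun ξ => S (e.1, ξ)) e.2 = 0}

/-- j_S (base ℝ²ⁿ): j_S(q,ξ) = (q, ∂_qS(q,ξ), S(q,ξ)). -/
def jE (n N : ℕ) (S : En n × (Fin N → ℝ) → ℝ) (e : En n × (Fin N → ℝ)) : En n × En n × ℝ :=
  (e.1, gradqE n N S e, S e)

/-- ∂_qS(q,ξ) for a function with base ℝ^{2n+1}. -/
def gradqC (n N : ℕ) (S : Cn n × (Fin N → ℝ) → ℝ) (e : Cn n × (Fin N → ℝ)) : Cn n :=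
  (fun i => fderiv ℝ (fun q => S (q, e.2)) e.1 ((Pi.single i 1 : Fin n → ℝ), 0, 0),
   fun i => fderiv ℝ (fun q => S (q, e.2)) e.1 (0, (Pi.single i 1 : Fin n → ℝ), 0),
   fderiv ℝ (fun q => S (q, e.2)) e.1 (0, 0, 1))

/-- Fiber-critical set (base ℝ^{2n+1}). -/
def SigmaCn (n N : ℕ) (S : Cn n × (Fin N → ℝ) → ℝ) : Set (Cn n × (Fin N → ℝ)) :=
  {e | fderiv ℝ (fun ξ => S (e.1, ξ)) e.2 = 0}

/-- j_S (base ℝ^{2n+1}). -/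
def jCn (n N : ℕ) (S : Cn n × (Fin N → ℝ) → ℝ) (e : Cn n × (Fin N → ℝ)) : Cn n × Cn n × ℝ :=
  (e.1, gradqC n N S e, S e)

/-- The exact Legendrian lift Γ̃_φ ⊂ J¹ℝ²ⁿ of Γ_φ. -/
def GammaTilde (n : ℕ) (φ : En n → En n) (F : En n → ℝ) (w : En n) : En n × En n × ℝ :=
  ((w.1, (φ w).2), ((φ w).2 - w.2, w.1 - (φ w).1),
   dot w.1 ((φ w).2) - dot ((φ w).1) ((φ w).2) + F w)

/-- The Legendrian graph Γ_{φ̃} ⊂ J¹ℝ^{2n+1} of the lift φ̃. -/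
def GammaLift (n : ℕ) (φ : En n → En n) (F : En n → ℝ) (q : Cn n) : Cn n × Cn n × ℝ :=
  ((q.1, (φ (q.1, q.2.1)).2, q.2.2),
   ((φ (q.1, q.2.1)).2 - q.2.1, q.1 - (φ (q.1, q.2.1)).1, 0),
   dot q.1 ((φ (q.1, q.2.1)).2) - dot ((φ (q.1, q.2.1)).1) ((φ (q.1, q.2.1)).2) +
     F (q.1, q.2.1))

/-- The z-independent extension S̃(x,y,z;ξ) = S(x,y;ξ). -/
def Stilde (n N : ℕ) (S : En n × (Fin N → ℝ) → ℝ) (e : Cn n × (Fin N → ℝ)) : ℝ :=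
  S ((e.1.1, e.1.2.1), e.2)

lemma fderiv_stilde (n N : ℕ) (S : En n × (Fin N → ℝ) → ℝ) (hS : ContDiff ℝ (⊤ : ℕ∞) S)
    (c : Cn n) (ξ : Fin N → ℝ) (v : Cn n) :
    fderiv ℝ (fun q : Cn n => Stilde n N S (q, ξ)) c v
      = fderiv ℝ (fun q' : En n => S (q', ξ)) (c.1, c.2.1) (v.1, v.2.1) := by
  set L : Cn n →L[ℝ] En n :=
    (ContinuousLinearMap.fst ℝ (Fin n → ℝ) ((Fin n → ℝ) × ℝ)).prod
      ((ContinuousLinearMap.fst ℝ (Fin n → ℝ) ℝ).comp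
        (ContinuousLinearMap.snd ℝ (Fin n → ℝ) ((Fin n → ℝ) × ℝ))) with hLdef
  have hSd : DifferentiableAt ℝ (fun q' : En n => S (q', ξ)) (c.1, c.2.1) :=
    ((hS.differentiable (by simp)).comp
      (differentiable_id.prodMk (differentiable_const ξ))) _
  have hL : (fun q : Cn n => Stilde n N S (q, ξ))
      = (fun q' : En n => S (q', ξ)) ∘ L := rfl
  rw [hL, fderiv_comp c hSd L.differentiableAt, L.fderiv]
  rfl

lemma gradqC_stilde (n N : ℕ) (S : En n × (Fin N → ℝ) → ℝ) (hS : ContDiff ℝ (⊤ : ℕ∞) S)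
    (c : Cn n) (ξ : Fin N → ℝ) :
    gradqC n N (Stilde n N S) (c, ξ)
      = ((gradqE n N S ((c.1, c.2.1), ξ)).1, (gradqE n N S ((c.1, c.2.1), ξ)).2, 0) := by
  refine Prod.ext ?_ (Prod.ext ?_ ?_)
  · funext i; exact fderiv_stilde n N S hS c ξ _
  · funext i; exact fderiv_stilde n N S hS c ξ _
  · show fderiv ℝ (fun q : Cn n => Stilde n N S (q, ξ)) c (0, 0, 1) = 0
    rw [fderiv_stilde n N S hS c ξ]
    exact (fderiv ℝ (fun q' : En n => S (q', ξ)) (c.1, c.2.1)).map_zero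

/-- If S generates Γ̃_φ, then S̃ generates Γ_{φ̃}. -/
theorem stmt_12 (n N : ℕ) (φ : En n → En n) (F : En n → ℝ)
    (hφ : ContDiff ℝ (⊤ : ℕ∞) φ) (hF : ContDiff ℝ (⊤ : ℕ∞) F)
    (hdF : ∀ (w v : En n),
      dot ((φ w).2) (fderiv ℝ (fun u => (φ u).1) w v) - dot w.2 v.1 = fderiv ℝ F w v)
    (S : En n × (Fin N → ℝ) → ℝ) (hS : ContDiff ℝ (⊤ : ℕ∞) S)
    (hgen : jE n N S '' SigmaE n N S = Set.range (GammaTilde n φ F)) :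
    jCn n N (Stilde n N S) '' SigmaCn n N (Stilde n N S) = Set.range (GammaLift n φ F) := by
  apply Set.ext; intro p; constructor
  · rintro ⟨⟨⟨x, y, z⟩, ξ⟩, hc, rfl⟩
    have hc' : (((x, y), ξ) : En n × (Fin N → ℝ)) ∈ SigmaE n N S := hc
    have hmem : jE n N S ((x, y), ξ) ∈ Set.range (GammaTilde n φ F) := by
      rw [← hgen]; exact ⟨_, hc', rfl⟩
    obtain ⟨⟨wx, wy⟩, hw⟩ := hmem
    have h1 := congrArg Prod.fst hw
    have h2 := congrArg (fun p => p.2.1) hw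
    have h3 := congrArg (fun p => p.2.2) hw
    simp only [jE, GammaTilde] at h1 h2 h3
    have hx : wx = x := congrArg Prod.fst h1
    have hy : (φ (wx, wy)).2 = y := congrArg Prod.snd h1
    subst hx
    rw [hy] at h2 h3
    refine ⟨(wx, wy, z), ?_⟩
    show GammaLift n φ F (wx, wy, z) = jCn n N (Stilde n N S) ((wx, y, z), ξ)
    rw [jCn, gradqC_stilde n N S hS]
    simp only [GammaLift, Stilde]
    have h2a : y - wy = (gradqE n N S ((wx, y), ξ)).1 := congrArg Prod.fst h2
    have h2b : wx - (φ (wx, wy)).1 = (gradqE n N S ((wx, y), ξ)).2 := congrArg Prod.snd h2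
    rw [hy, h2a, h2b, h3]
  · rintro ⟨⟨x, y, z⟩, rfl⟩
    have hmem : GammaTilde n φ F (x, y) ∈ jE n N S '' SigmaE n N S := by
      rw [hgen]; exact ⟨(x, y), rfl⟩
    obtain ⟨⟨w, ξ⟩, hSig, hj⟩ := hmem
    have h1 : w = (x, (φ (x, y)).2) := congrArg Prod.fst hj
    subst h1
    have h2 := congrArg (fun p => p.2.1) hj
    have h3 := congrArg (fun p => p.2.2) hj
    simp only [jE, GammaTilde] at h2 h3
    refine ⟨((x, (φ (x, y)).2, z), ξ), hSig, ?_⟩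
    show jCn n N (Stilde n N S) ((x, (φ (x, y)).2, z), ξ) = GammaLift n φ F (x, y, z)
    rw [jCn, gradqC_stilde n N S hS]
    simp only [GammaLift, Stilde]
    have h2a : (gradqE n N S ((x, (φ (x, y)).2), ξ)).1 = (φ (x, y)).2 - y :=
      congrArg Prod.fst h2
    have h2b : (gradqE n N S ((x, (φ (x, y)).2), ξ)).2 = x - (φ (x, y)).1 :=
      congrArg Prod.snd h2
    rw [h2a, h2b, h3]
end
end
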